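/- arXiv:2001.09435 — 2 statements merged into one kernel-verified Lean document; each statement's English description precedes it below -/
import Mathlib

section
/- Let K = {x ∈ ℝⁿ : gᵢ(x) ≤ 0 for all i ∈ [m], hⱼ(x) = 0 for all j ∈ [ℓ]}, where each gᵢ is a convex polynomial function and each hⱼ is an affine function, and let F : ℝⁿ → ℝⁿ be a polynomial map. Assume the Abadie constraint qualification holds at every point of K (the Bouligand tangent cone equals the linearization cone at every x ∈ K). Assume furthermore that for every index set α ⊆ [m], the Jacobian matrix DΦ_α(x, λ_α) of the KKT map Φ_α has rank n + |α| + ℓ at every point (x, λ_α) ∈ ℝⁿ × ℝ^{|α|}. Then the solution set Sol(K,F) has finitely many points. -/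
open Filter Topology

/-- The Bouligand–Severi tangent cone of `K` at `x`. -/
def bouligandTangentCone {n : ℕ} (K : Set (Fin n → ℝ)) (x : Fin n → ℝ) :
    Set (Fin n → ℝ) :=
  {v | ∃ (y : ℕ → Fin n → ℝ) (t : ℕ → ℝ), (∀ k, y k ∈ K) ∧ (∀ k, 0 < t k) ∧
    Tendsto y atTop (nhds x) ∧ Tendsto t atTop (nhds 0) ∧
    Tendsto (fun k => (t k)⁻¹ • (y k - x)) atTop (nhds v)}

/-- The gradient of `f : ℝⁿ → ℝ` at `x`: the vector of partial derivatives. -/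
noncomputable def grad {n : ℕ} (f : (Fin n → ℝ) → ℝ) (x : Fin n → ℝ) : Fin n → ℝ :=
  fun j => fderiv ℝ f x (Pi.single j 1)

/-- The Hessian matrix of `f : ℝⁿ → ℝ` at `x`. -/
noncomputable def hess {n : ℕ} (f : (Fin n → ℝ) → ℝ) (x : Fin n → ℝ) :
    Matrix (Fin n) (Fin n) ℝ :=
  Matrix.of fun a b => fderiv ℝ (fun y => grad f y a) x (Pi.single b 1)

/-- The Jacobian matrix of a map `F : ℝⁿ → ℝⁿ` at `x`. -/
noncomputable def jac {n : ℕ} (F : (Fin n → ℝ) → (Fin n → ℝ)) (x : Fin n → ℝ) :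
    Matrix (Fin n) (Fin n) ℝ :=
  Matrix.of fun a b => fderiv ℝ (fun y => F y a) x (Pi.single b 1)

/-- The linearization cone of the constraint system `(g, h)` at `x`. -/
def linCone {n m l : ℕ} (g : Fin m → (Fin n → ℝ) → ℝ)
    (h : Fin l → ((Fin n → ℝ) →ᵃ[ℝ] ℝ)) (x : Fin n → ℝ) : Set (Fin n → ℝ) :=
  {v | (∀ i, g i x = 0 → ∑ j, grad (g i) x j * v j ≤ 0) ∧
       ∀ j', ∑ j, grad (h j') x j * v j = 0}

/-- The Jacobian `DΦ_α(x, λ_α)` of the KKT map `Φ_α`: the square block matrix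
`[[DF(x) + Σ_{i∈α} λᵢ ∇²gᵢ(x), ∇g_α(x), ∇h(x)], [∇g_α(x)ᵀ, 0, 0], [∇h(x)ᵀ, 0, 0]]`
of size `n + |α| + ℓ`. -/
noncomputable def DPhi {n m l : ℕ} (F : (Fin n → ℝ) → (Fin n → ℝ))
    (g : Fin m → (Fin n → ℝ) → ℝ) (h : Fin l → ((Fin n → ℝ) →ᵃ[ℝ] ℝ))
    (α : Finset (Fin m)) (x : Fin n → ℝ) (lam : {i // i ∈ α} → ℝ) :
    Matrix (Fin n ⊕ ({i // i ∈ α} ⊕ Fin l)) (Fin n ⊕ ({i // i ∈ α} ⊕ Fin l)) ℝ :=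
  Matrix.of fun p q =>
    match p, q with
    | Sum.inl a, Sum.inl b =>
        jac F x a b + ∑ i : {i // i ∈ α}, lam i * hess (g i) x a b
    | Sum.inl a, Sum.inr (Sum.inl i) => grad (g i) x a
    | Sum.inl a, Sum.inr (Sum.inr j) => grad (h j) x a
    | Sum.inr (Sum.inl i), Sum.inl b => grad (g i) x b
    | Sum.inr (Sum.inr j), Sum.inl b => grad (h j) x b
    | Sum.inr _, Sum.inr _ => 0

/-!
At a solution `x`, the variational inequality makes `F x` nonnegative on the tangent cone, which
by the Abadie condition is the linearization cone. A vector nonnegative on that cone is orthogonal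
to its lineality space, so `F x` is a linear combination of the active gradients of `g` and the
gradients of `h`. Hence `x` is the `x`-part of a zero of the square polynomial system `Φ_α`, `α`
the active set, with multipliers of arbitrary sign.

By the rank hypothesis, every zero `z` of `Φ_α` is nondegenerate. First-order Taylor expansion then
shows `𝔪_z = I + 𝔪_z²` for the maximal ideal `𝔪_z` of `z` and the ideal `I` generated by the
system. By Nakayama's lemma `𝔪_z` is a minimal prime over `I`, and a Noetherian ring has only
finitely many of those.
-/

open MvPolynomial Matrix

theorem Ideal.mem_minimalPrimes_of_le_sup_mul_self {R : Type*} [CommRing R] {I P : Ideal R}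
    [hP : P.IsPrime] (hPfg : P.FG) (hIP : I ≤ P) (hsq : P ≤ I ⊔ P * P) :
    P ∈ I.minimalPrimes := by
  -- Nakayama in `R ⧸ I` gives `r ≡ 1 mod P` with `r * P ⊆ I`; `r` avoids every prime inside `P`
  obtain ⟨r, hr1, hr⟩ := Submodule.exists_sub_one_mem_and_smul_eq_zero_of_fg_of_le_smul P
    (Submodule.map I.mkQ P) (Submodule.FG.map _ hPfg) <| calc
      Submodule.map I.mkQ P ≤ Submodule.map I.mkQ (I ⊔ P • P) := Submodule.map_mono hsq
      _ = P • Submodule.map I.mkQ P := by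
        rw [Submodule.map_sup, Submodule.mkQ_map_self, bot_sup_eq, Submodule.map_smul'']
  refine ⟨⟨hP, hIP⟩, fun Q ⟨hQ, hIQ⟩ hQP a ha => ?_⟩
  have hrQ : r ∉ Q := fun hrQ => hP.ne_top <|
    (Ideal.eq_top_iff_one P).2 (by simpa using P.sub_mem (hQP hrQ) hr1)
  have hra : r * a ∈ I := by
    rw [← Ideal.Quotient.eq_zero_iff_mem, map_mul]
    exact hr _ (Submodule.mem_map_of_mem (f := I.mkQ) ha)
  exact (hQ.mem_or_mem (hIQ hra)).resolve_left hrQ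

namespace MvPolynomial

theorem pderiv_rename_eq_zero {R σ τ : Type*} [CommSemiring R] [DecidableEq τ]
    {f : σ → τ} {t : τ} (ht : t ∉ Set.range f) (P : MvPolynomial σ R) :
    pderiv t (rename f P) = 0 := by
  refine pderiv_eq_zero_of_notMem_vars fun hmem => ht ?_
  obtain ⟨s, -, rfl⟩ := Finset.mem_image.1 (vars_rename f P hmem)
  exact ⟨s, rfl⟩

section Field

variable {k σ : Type*} [Field k]

theorem ker_eval_injective : Function.Injective fun z : σ → k => RingHom.ker (eval z) := by
  intro z w (hzw : RingHom.ker (eval z) = RingHom.ker (eval w))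
  funext i
  have h : X i - C (z i) ∈ RingHom.ker (eval w) := hzw ▸ by simp [RingHom.mem_ker]
  simpa [RingHom.mem_ker, sub_eq_zero, eq_comm] using h

variable [Fintype σ] [DecidableEq σ]

theorem sub_C_eval_sub_sum_pderiv_mem_ker_mul_self (z : σ → k) (q : MvPolynomial σ k) :
    q - C (eval z q) - ∑ b, C (eval z (pderiv b q)) * (X b - C (z b)) ∈
      RingHom.ker (eval z) * RingHom.ker (eval z) := by
  induction q using MvPolynomial.induction_on with
  | C a => simp
  | add p q hp hq =>
    convert add_mem hp hq using 1
    simp only [map_add, add_mul, Finset.sum_add_distrib]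
    ring
  | mul_X p a hp =>
    have hp' : p - C (eval z p) ∈ RingHom.ker (eval z) := by simp [RingHom.mem_ker]
    have hX : X a - C (z a) ∈ RingHom.ker (eval z) := by simp [RingHom.mem_ker]
    have hsum : ∑ b, C (eval z (pderiv b (p * X a))) * (X b - C (z b)) =
        C (z a) * ∑ b, C (eval z (pderiv b p)) * (X b - C (z b)) +
          C (eval z p) * (X a - C (z a)) := by
      simp only [pderiv_mul, pderiv_X, eval_X, map_add, map_mul, add_mul, Finset.sum_add_distrib,
        Finset.mul_sum]
      congr 1
      · exact Finset.sum_congr rfl fun b _ => by ring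
      · simp [Pi.single_apply]
    convert add_mem (Ideal.mul_mem_mul hp' hX) (Ideal.mul_mem_left _ (C (z a)) hp) using 1
    rw [hsum, eval_mul, eval_X, map_mul]
    ring

noncomputable def jacobianAt (f : σ → MvPolynomial σ k) (z : σ → k) : Matrix σ σ k :=
  Matrix.of fun p b => eval z (pderiv b (f p))

theorem ker_eval_le_span_sup_mul_self {f : σ → MvPolynomial σ k} {z : σ → k}
    (hz : ∀ p, eval z (f p) = 0) (hJ : IsUnit (jacobianAt f z)) :
    RingHom.ker (eval z) ≤
      Ideal.span (Set.range f) ⊔ RingHom.ker (eval z) * RingHom.ker (eval z) := by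
  set N := Ideal.span (Set.range f) ⊔ RingHom.ker (eval z) * RingHom.ker (eval z)
  have hmul : RingHom.ker (eval z) * RingHom.ker (eval z) ≤ N := le_sup_right
  set ξ : σ → MvPolynomial σ k := fun b => X b - C (z b)
  set J := jacobianAt f z
  have hJξ (p : σ) : (J.map C *ᵥ ξ) p ∈ N := by
    have h := sub_C_eval_sub_sum_pderiv_mem_ker_mul_self z (f p)
    rw [hz p, map_zero, sub_zero] at h
    convert N.sub_mem (Ideal.mem_sup_left (Ideal.subset_span ⟨p, rfl⟩)) (hmul h) using 1
    simp [mulVec, dotProduct, J, jacobianAt, ξ]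
  have hξ (b : σ) : ξ b ∈ N := by
    have hinv : J⁻¹.map C *ᵥ (J.map C *ᵥ ξ) = ξ := by
      rw [mulVec_mulVec, ← Matrix.map_mul, nonsing_inv_mul J ((isUnit_iff_isUnit_det J).1 hJ),
        Matrix.map_one _ (map_zero C) (map_one C), one_mulVec]
    rw [← hinv]
    exact N.sum_mem fun p _ => N.mul_mem_left _ (hJξ p)
  intro q hq
  have h := sub_C_eval_sub_sum_pderiv_mem_ker_mul_self z q
  rw [RingHom.mem_ker.1 hq, map_zero, sub_zero] at h
  have hlin : ∑ b, C (eval z (pderiv b q)) * ξ b ∈ N :=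
    N.sum_mem fun b _ => N.mul_mem_left _ (hξ b)
  simpa [ξ] using N.add_mem (hmul h) hlin

theorem finite_setOf_isUnit_jacobianAt (f : σ → MvPolynomial σ k) :
    {z | (∀ p, eval z (f p) = 0) ∧ IsUnit (jacobianAt f z)}.Finite := by
  refine ((Ideal.span (Set.range f)).finite_minimalPrimes_of_isNoetherianRing _).preimage
    ker_eval_injective.injOn |>.subset ?_
  rintro z ⟨hz, hJ⟩
  show RingHom.ker (eval z) ∈ (Ideal.span (Set.range f)).minimalPrimes
  have := RingHom.ker_isPrime (eval z)
  refine Ideal.mem_minimalPrimes_of_le_sup_mul_self (IsNoetherian.noetherian _) ?_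
    (ker_eval_le_span_sup_mul_self hz hJ)
  rw [Ideal.span_le]
  rintro _ ⟨p, rfl⟩
  exact hz p

end Field

theorem hasFDerivAt_eval {𝕜 ι : Type*} [NontriviallyNormedField 𝕜] [Fintype ι] [DecidableEq ι]
    (P : MvPolynomial ι 𝕜) (x : ι → 𝕜) :
    HasFDerivAt (fun y => eval y P)
      (∑ b, eval x (pderiv b P) • ContinuousLinearMap.proj (R := 𝕜) (φ := fun _ : ι => 𝕜) b) x := by
  induction P using MvPolynomial.induction_on with
  | C a =>
    simp only [eval_C]
    refine (hasFDerivAt_const (𝕜 := 𝕜) a x).congr_fderiv ?_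
    ext v
    simp
  | add p q hp hq =>
    simp only [eval_add]
    refine (hp.add hq).congr_fderiv ?_
    ext v
    simp [add_mul, Finset.sum_add_distrib]
  | mul_X p a hp =>
    simp only [eval_mul, eval_X]
    refine (hp.mul (ContinuousLinearMap.proj a).hasFDerivAt).congr_fderiv ?_
    ext v
    simp [pderiv_X, Pi.single_apply, apply_ite (eval x), mul_add,
      Finset.sum_add_distrib, Finset.mul_sum, mul_comm, mul_left_comm]

end MvPolynomial

theorem AffineMap.exists_mvPolynomial {R ι : Type*} [CommRing R] [Fintype ι] [DecidableEq ι]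
    (h : (ι → R) →ᵃ[R] R) :
    ∃ P : MvPolynomial ι R, (∀ x, h x = eval x P) ∧ ∀ a b, pderiv b (pderiv a P) = 0 := by
  refine ⟨C (h 0) + ∑ a, C (h.linear (Pi.single a 1)) * X a, fun x => ?_, fun a b => ?_⟩
  · have hsingle : ∀ i : ι, (fun j => if i = j then (1 : R) else 0) = Pi.single i 1 := fun i => by
      ext j; simp [Pi.single_apply, eq_comm]
    have hlin := h.linear.pi_apply_eq_sum_univ x
    simp only [hsingle] at hlin
    rw [h.decomp]
    simp [hlin, mul_comm, add_comm]
  · simp [pderiv_X, Pi.single_apply]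

theorem Matrix.isUnit_of_rank_eq_card {K ι : Type*} [Field K] [Fintype ι] [DecidableEq ι]
    {M : Matrix ι ι K} (h : M.rank = Fintype.card ι) : IsUnit M := by
  refine mulVec_surjective_iff_isUnit.1 fun y => ?_
  have : LinearMap.range M.mulVecLin = ⊤ :=
    Submodule.eq_top_of_finrank_eq (by rw [← Matrix.rank, h, Module.finrank_pi])
  simpa using LinearMap.range_eq_top.1 this y

theorem mem_span_range_of_forall_dotProduct_eq_zero {K ι κ : Type*} [Field K] [Fintype ι]
    [DecidableEq ι] {w : κ → ι → K} {u : ι → K}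
    (H : ∀ v, (∀ k, w k ⬝ᵥ v = 0) → u ⬝ᵥ v = 0) : u ∈ Submodule.span K (Set.range w) := by
  by_contra hu
  obtain ⟨f, hfu, hf⟩ := Submodule.exists_dual_map_eq_bot_of_notMem hu inferInstance
  obtain ⟨v, rfl⟩ := (dotProductEquiv K ι).surjective f
  refine hfu ?_
  have hw : ∀ k, v ⬝ᵥ w k = 0 := fun k =>
    (Submodule.mem_bot K).1 (hf ▸ Submodule.mem_map_of_mem (Submodule.subset_span ⟨k, rfl⟩))
  simpa [dotProduct_comm v] using H v fun k => by rw [dotProduct_comm]; exact hw k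

section PolynomialDerivatives

variable {n : ℕ}

theorem grad_eq_eval_pderiv {f : (Fin n → ℝ) → ℝ} {P : MvPolynomial (Fin n) ℝ}
    (hf : ∀ x, f x = eval x P) (x : Fin n → ℝ) (j : Fin n) :
    grad f x j = eval x (pderiv j P) := by
  rw [grad, funext hf, (hasFDerivAt_eval P x).fderiv]
  simp [Pi.single_apply]

theorem hess_eq_eval_pderiv_pderiv {f : (Fin n → ℝ) → ℝ} {P : MvPolynomial (Fin n) ℝ}
    (hf : ∀ x, f x = eval x P) (x : Fin n → ℝ) (a b : Fin n) :
    hess f x a b = eval x (pderiv b (pderiv a P)) :=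
  grad_eq_eval_pderiv (f := fun y => grad f y a) (fun y => grad_eq_eval_pderiv hf y a) x b

theorem jac_eq_eval_pderiv {F : (Fin n → ℝ) → Fin n → ℝ} {P : Fin n → MvPolynomial (Fin n) ℝ}
    (hF : ∀ a x, F x a = eval x (P a)) (x : Fin n → ℝ) (a b : Fin n) :
    jac F x a b = eval x (pderiv b (P a)) :=
  grad_eq_eval_pderiv (f := fun y => F y a) (hF a) x b

end PolynomialDerivatives

theorem dotProduct_nonneg_of_mem_bouligandTangentCone {n : ℕ} {K : Set (Fin n → ℝ)}
    {x u v : Fin n → ℝ} (hu : ∀ y ∈ K, 0 ≤ u ⬝ᵥ (y - x)) (hv : v ∈ bouligandTangentCone K x) :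
    0 ≤ u ⬝ᵥ v := by
  obtain ⟨y, t, hyK, ht, -, -, hlim⟩ := hv
  refine ge_of_tendsto (((continuous_const.dotProduct continuous_id).tendsto v).comp hlim)
    (Eventually.of_forall fun k => ?_)
  simpa [dotProduct_smul] using mul_nonneg (inv_nonneg.2 (ht k).le) (hu _ (hyK k))

theorem exists_multipliers_of_nonneg_on_linCone {n m l : ℕ} {g : Fin m → (Fin n → ℝ) → ℝ}
    {h : Fin l → (Fin n → ℝ) →ᵃ[ℝ] ℝ} {x u : Fin n → ℝ} {α : Finset (Fin m)}
    (hα : ∀ i, g i x = 0 → i ∈ α) (hu : ∀ v ∈ linCone g h x, 0 ≤ u ⬝ᵥ v) :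
    ∃ (lam : α → ℝ) (mu : Fin l → ℝ),
      u + ∑ i : α, lam i • grad (g i) x + ∑ j, mu j • grad (h j) x = 0 := by
  set w : α ⊕ Fin l → Fin n → ℝ := Sum.elim (fun i => grad (g i) x) (fun j => grad (h j) x)
  -- if `v` is orthogonal to every `w k`, then both `v` and `-v` lie in `linCone g h x`
  have hspan : -u ∈ Submodule.span ℝ (Set.range w) := by
    refine mem_span_range_of_forall_dotProduct_eq_zero fun v hv => ?_
    have hg : ∀ i, g i x = 0 → grad (g i) x ⬝ᵥ v = 0 := fun i hi => hv (Sum.inl ⟨i, hα i hi⟩)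
    have hh : ∀ j, grad (h j) x ⬝ᵥ v = 0 := fun j => hv (Sum.inr j)
    have hpos := hu v ⟨fun i hi => (hg i hi).le, hh⟩
    have hneg := hu (-v)
      ⟨fun i hi => (by rw [dotProduct_neg, hg i hi, neg_zero] : grad (g i) x ⬝ᵥ -v = 0).le,
        fun j => (by rw [dotProduct_neg, hh j, neg_zero] : grad (h j) x ⬝ᵥ -v = 0)⟩
    rw [dotProduct_neg] at hneg
    rw [neg_dotProduct]
    linarith
  obtain ⟨c, hc⟩ := (Submodule.mem_span_range_iff_exists_fun ℝ).1 hspan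
  refine ⟨c ∘ Sum.inl, c ∘ Sum.inr, ?_⟩
  rw [Fintype.sum_sum_type] at hc
  simp only [w, Sum.elim_inl, Sum.elim_inr] at hc
  rw [add_assoc, Function.comp_def, Function.comp_def, hc, add_neg_cancel]

section KKT

variable {n m l : ℕ}

/-- The components of `Φ_α` as polynomials in the variables `(x, λ_α, μ)`, when `F`, `g`, `h` are
given by the polynomials `PF`, `Pg`, `Ph`. -/
noncomputable def kktPoly (PF : Fin n → MvPolynomial (Fin n) ℝ)
    (Pg : Fin m → MvPolynomial (Fin n) ℝ) (Ph : Fin l → MvPolynomial (Fin n) ℝ)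
    (α : Finset (Fin m)) : Fin n ⊕ (α ⊕ Fin l) → MvPolynomial (Fin n ⊕ (α ⊕ Fin l)) ℝ :=
  Sum.elim
    (fun a => rename Sum.inl (PF a)
      + ∑ i : α, X (Sum.inr (Sum.inl i)) * rename Sum.inl (pderiv a (Pg i))
      + ∑ j, X (Sum.inr (Sum.inr j)) * rename Sum.inl (pderiv a (Ph j)))
    (Sum.elim (fun i => rename Sum.inl (Pg i)) (fun j => rename Sum.inl (Ph j)))

variable {F : (Fin n → ℝ) → Fin n → ℝ} {g : Fin m → (Fin n → ℝ) → ℝ}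
  {h : Fin l → (Fin n → ℝ) →ᵃ[ℝ] ℝ} {PF : Fin n → MvPolynomial (Fin n) ℝ}
  {Pg : Fin m → MvPolynomial (Fin n) ℝ} {Ph : Fin l → MvPolynomial (Fin n) ℝ}

theorem jacobianAt_kktPoly (hF : ∀ a x, F x a = eval x (PF a))
    (hg : ∀ i x, g i x = eval x (Pg i)) (hh : ∀ j x, h j x = eval x (Ph j))
    (hhess : ∀ j a b, pderiv b (pderiv a (Ph j)) = 0)
    (α : Finset (Fin m)) (z : Fin n ⊕ (α ⊕ Fin l) → ℝ) :
    jacobianAt (kktPoly PF Pg Ph α) z = DPhi F g h α (z ∘ Sum.inl) (z ∘ Sum.inr ∘ Sum.inl) := by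
  ext (a | i | j) (b | i' | j') <;>
    simp [jacobianAt, kktPoly, DPhi, pderiv_rename Sum.inl_injective, pderiv_rename_eq_zero,
      eval_rename, pderiv_X, Pi.single_apply, hhess, jac_eq_eval_pderiv hF,
      hess_eq_eval_pderiv_pderiv (hg _), grad_eq_eval_pderiv (hg _), grad_eq_eval_pderiv (hh _)]

theorem eval_kktPoly_eq_zero (hF : ∀ a x, F x a = eval x (PF a))
    (hg : ∀ i x, g i x = eval x (Pg i)) (hh : ∀ j x, h j x = eval x (Ph j))
    {α : Finset (Fin m)} {x : Fin n → ℝ} {lam : α → ℝ} {mu : Fin l → ℝ}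
    (hstat : F x + ∑ i : α, lam i • grad (g i) x + ∑ j, mu j • grad (h j) x = 0)
    (hα : ∀ i ∈ α, g i x = 0) (hfeas : ∀ j, h j x = 0) (p : Fin n ⊕ (α ⊕ Fin l)) :
    eval (Sum.elim x (Sum.elim lam mu)) (kktPoly PF Pg Ph α p) = 0 := by
  rcases p with a | i | j
  · simpa [kktPoly, eval_rename, Finset.sum_apply, ← hF, grad_eq_eval_pderiv (hg _),
      grad_eq_eval_pderiv (hh _)] using congrFun hstat a
  · simpa [kktPoly, eval_rename, ← hg] using hα i i.2
  · simpa [kktPoly, eval_rename, ← hh] using hfeas j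

end KKT

theorem solution_set_finite_of_full_rank_general {n m l : ℕ}
    (g : Fin m → (Fin n → ℝ) → ℝ)
    (hgpoly : ∀ i, ∃ P : MvPolynomial (Fin n) ℝ, ∀ x, g i x = MvPolynomial.eval x P)
    (h : Fin l → ((Fin n → ℝ) →ᵃ[ℝ] ℝ))
    (F : (Fin n → ℝ) → (Fin n → ℝ))
    (hFpoly : ∀ i, ∃ P : MvPolynomial (Fin n) ℝ, ∀ x, F x i = MvPolynomial.eval x P)
    (K : Set (Fin n → ℝ))
    (hK : K = {x | (∀ i, g i x ≤ 0) ∧ ∀ j, h j x = 0})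
    (ACQ : ∀ x ∈ K, bouligandTangentCone K x = linCone g h x)
    (hrank : ∀ (α : Finset (Fin m)) (x : Fin n → ℝ) (lam : {i // i ∈ α} → ℝ),
      (DPhi F g h α x lam).rank = n + α.card + l) :
    Set.Finite {x ∈ K | ∀ y ∈ K, 0 ≤ ∑ i, F x i * (y i - x i)} := by
  choose Pg hPg using hgpoly
  choose PF hPF using hFpoly
  choose Ph hPh hPh2 using fun j => (h j).exists_mvPolynomial
  have hzeros (α : Finset (Fin m)) : {z | ∀ p, eval z (kktPoly PF Pg Ph α p) = 0}.Finite := by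
    refine (finite_setOf_isUnit_jacobianAt _).subset fun z hz => ⟨hz, ?_⟩
    rw [jacobianAt_kktPoly hPF hPg hPh hPh2]
    exact isUnit_of_rank_eq_card (by rw [hrank]; simp [add_assoc])
  refine (Set.finite_iUnion fun α => (hzeros α).image (· ∘ Sum.inl)).subset ?_
  rintro x ⟨hxK, hxsol⟩
  obtain ⟨lam, mu, hstat⟩ := exists_multipliers_of_nonneg_on_linCone
      (α := Finset.univ.filter fun i => g i x = 0) (by simp) fun v hv =>
    dotProduct_nonneg_of_mem_bouligandTangentCone hxsol ((ACQ x hxK).symm ▸ hv)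
  rw [hK] at hxK
  refine Set.mem_iUnion.2 ⟨_, _, ?_, Sum.elim_comp_inl x (Sum.elim lam mu)⟩
  exact eval_kktPoly_eq_zero hPF hPg hPh hstat (fun i hi => (Finset.mem_filter.1 hi).2) hxK.2

/-- For `K = {x : gᵢ(x) ≤ 0, hⱼ(x) = 0}` with `gᵢ` convex polynomial and
`hⱼ` affine, `F` a polynomial map, the Abadie constraint qualification holding on `K`,
and the Jacobian `DΦ_α` of full rank `n + |α| + ℓ` everywhere for every `α ⊆ [m]`,
the solution set `Sol(K, F)` has finitely many points. -/
theorem solution_set_finite_of_full_rank {n m l : ℕ}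
    (g : Fin m → (Fin n → ℝ) → ℝ)
    (hgpoly : ∀ i, ∃ P : MvPolynomial (Fin n) ℝ, ∀ x, g i x = MvPolynomial.eval x P)
    (hgconv : ∀ i, ConvexOn ℝ Set.univ (g i))
    (h : Fin l → ((Fin n → ℝ) →ᵃ[ℝ] ℝ))
    (F : (Fin n → ℝ) → (Fin n → ℝ))
    (hFpoly : ∀ i, ∃ P : MvPolynomial (Fin n) ℝ, ∀ x, F x i = MvPolynomial.eval x P)
    (K : Set (Fin n → ℝ))
    (hK : K = {x | (∀ i, g i x ≤ 0) ∧ ∀ j, h j x = 0})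
    (ACQ : ∀ x ∈ K, bouligandTangentCone K x = linCone g h x)
    (hrank : ∀ (α : Finset (Fin m)) (x : Fin n → ℝ) (lam : {i // i ∈ α} → ℝ),
      (DPhi F g h α x lam).rank = n + α.card + l) :
    Set.Finite {x ∈ K | ∀ y ∈ K, 0 ≤ ∑ i, F x i * (y i - x i)} :=
  solution_set_finite_of_full_rank_general g hgpoly h F hFpoly K hK ACQ hrank
end

section
/- Let K ⊆ ℝⁿ be a closed convex set with nonempty interior and let F : ℝⁿ → ℝⁿ be a polynomial map. Then the solution set Sol(K,F) contains a nonempty open subset of ℝⁿ (equivalently, Sol(K,F) has nonempty interior, which for a semialgebraic set is equivalent to having full dimension n) if and only if F is the zero polynomial map. In particular, if F = 0 then Sol(K,F) = K. -/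
open MvPolynomial

lemma poly_zero_of_zero_on_open {n : ℕ} (P : MvPolynomial (Fin n) ℝ)
    {U : Set (Fin n → ℝ)} (hU : IsOpen U) (hne : U.Nonempty)
    (h : ∀ x ∈ U, MvPolynomial.eval x P = 0) :
    ∀ x, MvPolynomial.eval x P = 0 := by
  obtain ⟨z₀, hz₀⟩ := hne
  have han : AnalyticOnNhd ℝ (fun x : Fin n → ℝ => MvPolynomial.eval x P) Set.univ := by
    intro x _
    have : AnalyticAt ℝ (fun x : Fin n → ℝ => MvPolynomial.aeval x P) x := by
      apply AnalyticAt.aeval_mvPolynomial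
      intro i
      exact ((ContinuousLinearMap.proj i : (Fin n → ℝ) →L[ℝ] ℝ)).analyticAt x
    have heq : (fun x : Fin n → ℝ => MvPolynomial.aeval x P)
        = (fun x : Fin n → ℝ => MvPolynomial.eval x P) := by
      funext z
      rw [MvPolynomial.aeval_def, Algebra.algebraMap_self]
      rfl
    rwa [heq] at this
  have := han.eqOn_zero_of_preconnected_of_eventuallyEq_zero
    isPreconnected_univ (Set.mem_univ z₀)
    (Filter.eventuallyEq_of_mem (hU.mem_nhds hz₀) (fun x hx => h x hx))
  intro x
  exact this (Set.mem_univ x)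

/-- Let `K ⊆ ℝⁿ` be closed convex with nonempty interior and let
`F : ℝⁿ → ℝⁿ` be a polynomial map.  Then `Sol(K, F)` contains a nonempty open
subset of `ℝⁿ` iff `F` is the zero polynomial map; and if `F = 0` then
`Sol(K, F) = K`. -/
theorem full_dimensional_solution_set_iff_zero_map {n : ℕ}
    (K : Set (Fin n → ℝ)) (hKclosed : IsClosed K) (hKconv : Convex ℝ K)
    (hKint : (interior K).Nonempty)
    (F : (Fin n → ℝ) → (Fin n → ℝ))
    (hFpoly : ∀ i, ∃ P : MvPolynomial (Fin n) ℝ, ∀ x, F x i = MvPolynomial.eval x P) :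
    ((∃ U : Set (Fin n → ℝ), IsOpen U ∧ U.Nonempty ∧
        U ⊆ {x ∈ K | ∀ y ∈ K, 0 ≤ ∑ i, F x i * (y i - x i)}) ↔
      (∀ x, F x = 0)) ∧
    ((∀ x, F x = 0) →
      {x ∈ K | ∀ y ∈ K, 0 ≤ ∑ i, F x i * (y i - x i)} = K) := by
  have hsol : ∀ x : Fin n → ℝ, x ∈ interior K →
      (∀ y ∈ K, 0 ≤ ∑ i, F x i * (y i - x i)) → F x = 0 := by
    intro x hx hineq
    by_contra hFx
    obtain ⟨r, hr, hball⟩ := Metric.isOpen_iff.1 isOpen_interior x hx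
    have hnorm : 0 < ‖F x‖ := norm_pos_iff.2 hFx
    set ε : ℝ := r / (2 * ‖F x‖) with hε
    have hεpos : 0 < ε := by positivity
    set y : Fin n → ℝ := x - ε • F x with hy
    have hyK : y ∈ K := by
      apply interior_subset
      apply hball
      simp only [Metric.mem_ball, hy, dist_eq_norm]
      rw [sub_sub_cancel_left, norm_neg, norm_smul, Real.norm_eq_abs, abs_of_pos hεpos, hε]
      rw [div_mul_eq_mul_div, mul_comm]
      rw [div_lt_iff₀ (by positivity)]
      nlinarith [hnorm]
    have h0 := hineq y hyK
    have : ∑ i, F x i * (y i - x i) = -ε * ∑ i, (F x i)^2 := by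
      rw [Finset.mul_sum]
      apply Finset.sum_congr rfl
      intro i _
      simp [hy, Pi.sub_apply, Pi.smul_apply, smul_eq_mul]
      ring
    rw [this] at h0
    have hsq : ∑ i, (F x i)^2 ≤ 0 := by nlinarith
    have hsq0 : ∑ i, (F x i)^2 = 0 :=
      le_antisymm hsq (Finset.sum_nonneg (fun i _ => sq_nonneg _))
    apply hFx
    funext i
    have := (Finset.sum_eq_zero_iff_of_nonneg (fun i _ => sq_nonneg (F x i))).1 hsq0 i
      (Finset.mem_univ i)
    exact pow_eq_zero_iff (by norm_num) |>.1 this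
  constructor
  · constructor
    · rintro ⟨U, hUopen, hUne, hUsub⟩
      have hU0 : ∀ x ∈ U, F x = 0 := by
        intro x hx
        have hxS := hUsub hx
        have hxint : x ∈ interior K := by
          apply interior_maximal _ hUopen hx
          exact fun z hz => (hUsub hz).1
        exact hsol x hxint hxS.2
      intro x
      funext i
      obtain ⟨P, hP⟩ := hFpoly i
      have := poly_zero_of_zero_on_open P hUopen hUne (fun z hz => by
        rw [← hP z]; rw [hU0 z hz]; rfl)
      rw [hP x, this x]
      rfl
    · intro hF
      refine ⟨interior K, isOpen_interior, hKint, ?_⟩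
      intro x hx
      refine ⟨interior_subset hx, fun y _ => ?_⟩
      simp [hF x]
  · intro hF
    ext x
    simp only [Set.mem_setOf_eq]
    constructor
    · exact fun h => h.1
    · intro h
      exact ⟨h, fun y _ => by simp [hF x]⟩
end
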